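/- Curvature of the Glauber dynamics (heat bath) for the Ising model: let G be a finite graph with maximal vertex degree v_max, let 𝒳 = {−1,1}^G with distance d(s,s') = ½ ∑_{x∈G} |s(x) − s'(x)|, let β ≥ 0, h ∈ ℝ, and define the energy U(s) = −∑_{x∼y} s(x)s(y) − h ∑_{x∈G} s(x). Consider the heat bath kernel: from state s, pick x ∈ G uniformly at random and set the spin at x to +1 with probability e^{−βU(s_{x+})}/(e^{−βU(s_{x+})} + e^{−βU(s_{x−})}) and to −1 with the complementary probability, where s_{x±} denotes s with the spin at x set to ±1. Then this chain has positive Ricci curvature κ ≥ (1/|G|)(1 − v_max · (e^β − e^{−β})/(e^β + e^{−β})); in particular W₁(P_s, P_{s'}) ≤ (1 − κ) d(s,s') with this value of κ, for all s, s' ∈ 𝒳. -/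

import Mathlib

/-!
Path coupling at a single site: both chains update the same uniformly chosen site `x`, and the
two heat-bath laws at `x` are coupled maximally. A disagreement at `x` is then repaired, and a new
one is created only with probability `|p_s(x) - p_{s'}(x)|`. The heat-bath probability is
`sigmoid (2β (m_x + h))`, where `m_x` is the local field; each disagreeing neighbour shifts the
argument by `±4β`, and the sigmoid grows by at most `tanh β` over any window of width `4β` (the
worst window being centred at `0`). Since a disagreeing site is the neighbour of at most `v_max`
sites, the expected distance after one step is at most `(1 - (1 - v_max tanh β)/|G|) d(s, s')`.
-/

open MeasureTheory ENNReal
open scoped NNReal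

noncomputable section

variable {X : Type*} [MetricSpace X] [MeasurableSpace X]

/-- The L¹ Wasserstein distance between two measures on a metric space,
defined as the infimum of the transport cost over all couplings. -/
def W1 (μ ν : Measure X) : ℝ≥0∞ :=
  ⨅ (ξ : Measure (X × X)) (_ : ξ.map Prod.fst = μ) (_ : ξ.map Prod.snd = ν),
    ∫⁻ p, edist p.1 p.2 ∂ξ

/-- The Markov kernel `P` has (coarse) Ricci curvature at least `κ`:
`W₁(P_x, P_y) ≤ (1-κ) d(x,y)` for all `x, y`. -/
def PosCurvature (P : X → Measure X) (κ : ℝ) : Prop :=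
  ∀ x y : X, W1 (P x) (P y) ≤ ENNReal.ofReal ((1 - κ) * dist x y)

/-- `N`-step transition kernel: `stepN P 0 x = δ_x` and
`stepN P (N+1) x = ∫ P_z(dy) (stepN P N x)(dz)`. -/
def stepN (P : X → Measure X) : ℕ → X → Measure X
  | 0 => fun x => Measure.dirac x
  | n + 1 => fun x => (stepN P n x).bind P

/-- Iterated averaging operator `P^N f (x) = ∫ f d(P_x^N)`. -/
def avgN (P : X → Measure X) (n : ℕ) (f : X → ℝ) (x : X) : ℝ :=
  ∫ y, f y ∂(stepN P n x)

/-- Law of the trajectory `(X_1, …, X_n)` of the Markov chain started at `x`. -/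
def pathLaw (P : X → Measure X) : (n : ℕ) → X → Measure (Fin n → X)
  | 0 => fun _ => Measure.dirac (fun i : Fin 0 => i.elim0)
  | n + 1 => fun x => (P x).bind fun y => (pathLaw P n y).map (fun p => Fin.cons y p)

/-- Empirical mean `π̂(f) = (1/T) ∑_{k=T₀+1}^{T₀+T} f(X_k)`, as a function of the
trajectory `(X_1, …, X_{T₀+T})`. -/
def empMean (f : X → ℝ) (T₀ T : ℕ) (p : Fin (T₀ + T) → X) : ℝ :=
  (1 / (T : ℝ)) * ∑ i : Fin (T₀ + T), if T₀ ≤ (i : ℕ) then f (p i) else 0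

/-- Expectation `E_x π̂(f)` of the empirical mean for the chain started at `x`. -/
def empExp (P : X → Measure X) (f : X → ℝ) (T₀ T : ℕ) (x : X) : ℝ :=
  ∫ p, empMean f T₀ T p ∂(pathLaw P (T₀ + T) x)

/-- Variance `Var_x π̂(f)` of the empirical mean for the chain started at `x`. -/
def empVar (P : X → Measure X) (f : X → ℝ) (T₀ T : ℕ) (x : X) : ℝ :=
  ∫ p, (empMean f T₀ T p - empExp P f T₀ T x) ^ 2 ∂(pathLaw P (T₀ + T) x)

/-- Lipschitz seminorm `‖f‖_Lip = sup_{x ≠ y} |f(x) - f(y)|/d(x,y)`, as the least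
Lipschitz constant of `f`. -/
def lipNorm (f : X → ℝ) : ℝ :=
  sInf {K : ℝ | ∀ x y : X, |f x - f y| ≤ K * dist x y}

/-- Coarse diffusion constant `σ(x)² = ½ ∬ d(y,z)² P_x(dy) P_x(dz)`. -/
def diffSq (P : X → Measure X) (x : X) : ℝ :=
  (1 / 2) * ∫ y, ∫ z, dist y z ^ 2 ∂(P x) ∂(P x)

/-- Local dimension `n_x`. -/
def localDim (P : X → Measure X) (x : X) : ℝ :=
  sInf {r : ℝ | ∃ f : X → ℝ, (∃ K : ℝ≥0, LipschitzWith K f) ∧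
    (∫ y, ∫ z, |f y - f z| ^ 2 ∂(P x) ∂(P x)) ≠ 0 ∧
    r = (∫ y, ∫ z, dist y z ^ 2 ∂(P x) ∂(P x)) /
        (∫ y, ∫ z, |f y - f z| ^ 2 ∂(P x) ∂(P x))}

/-- Support of a measure: the set of points all of whose open neighborhoods have
positive measure. -/
def msupp (μ : Measure X) : Set X :=
  {x : X | ∀ U : Set X, IsOpen U → x ∈ U → μ U ≠ 0}

/-- Granularity `σ_∞ = ½ sup_x diam (supp P_x)`, valued in `ℝ≥0∞`. -/
def granularity (P : X → Measure X) : ℝ≥0∞ :=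
  (1 / 2) * ⨆ x : X, EMetric.diam (msupp (P x))

/-- Eccentricity `E(x) = ∫ d(x,y) π(dy)`. -/
def ecc (π : Measure X) (x : X) : ℝ := ∫ y, dist x y ∂π


/-- Spin configurations on the vertex set `V`: an element of `{−1,1}^V`, encoded as
`V → Bool` with the Hamming distance (which equals `½ ∑_x |s(x) − s'(x)|` for
`±1`-valued spins). -/
abbrev SpinConf (V : Type*) [Fintype V] := Hamming (fun _ : V => Bool)

instance (V : Type*) [Fintype V] : MeasurableSpace (SpinConf V) := ⊤

/-- The `±1` spin value at a site. -/
def spin {V : Type*} [Fintype V] (s : SpinConf V) (x : V) : ℝ :=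
  if Hamming.ofHamming s x then 1 else -1

/-- The configuration `s` with the spin at `x` set to `+1` (if `b = true`) or `−1`. -/
def setSpin {V : Type*} [Fintype V] [DecidableEq V] (s : SpinConf V) (x : V) (b : Bool) :
    SpinConf V :=
  Hamming.toHamming (Function.update (Hamming.ofHamming s) x b)

/-- Ising energy `U(s) = −∑_{x∼y} s(x)s(y) − h ∑_x s(x)` (each edge counted once). -/
def isingEnergy {V : Type*} [Fintype V] (G : SimpleGraph V) [DecidableRel G.Adj]
    (h : ℝ) (s : SpinConf V) : ℝ :=
  -(1 / 2) * (∑ x : V, ∑ y : V, if G.Adj x y then spin s x * spin s y else 0)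
    - h * ∑ x : V, spin s x

/-- Glauber dynamics (heat bath) for the Ising model: pick a uniform random site `x` and
resample its spin according to the local Gibbs equilibrium. -/
def glauberKernel {V : Type*} [Fintype V] [DecidableEq V] (G : SimpleGraph V)
    [DecidableRel G.Adj] (β h : ℝ) : SpinConf V → Measure (SpinConf V) := fun s =>
  ((Fintype.card V : ℝ≥0∞))⁻¹ •
    ∑ x : V,
      (ENNReal.ofReal (Real.exp (-β * isingEnergy G h (setSpin s x true)) /
          (Real.exp (-β * isingEnergy G h (setSpin s x true))
            + Real.exp (-β * isingEnergy G h (setSpin s x false)))) •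
            Measure.dirac (setSpin s x true)
        + ENNReal.ofReal (Real.exp (-β * isingEnergy G h (setSpin s x false)) /
            (Real.exp (-β * isingEnergy G h (setSpin s x true))
              + Real.exp (-β * isingEnergy G h (setSpin s x false)))) •
              Measure.dirac (setSpin s x false))

open Finset Real Hamming

namespace Real

theorem exp_div_exp_add_exp (u v : ℝ) : exp u / (exp u + exp v) = sigmoid (u - v) := by
  rw [sigmoid_def, neg_sub, exp_sub]
  field_simp

theorem tanh_nonneg {a : ℝ} (ha : 0 ≤ a) : 0 ≤ tanh a := by
  rw [tanh_eq_sinh_div_cosh]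
  exact div_nonneg (sinh_nonneg_iff.2 ha) (cosh_pos a).le

theorem sigmoid_add_four_mul_sub_le_tanh {a : ℝ} (ha : 0 ≤ a) (z : ℝ) :
    sigmoid (z + 4 * a) - sigmoid z ≤ tanh a := by
  obtain ⟨E, hE1, hE⟩ : ∃ E, 1 ≤ E ∧ exp (2 * a) = E := ⟨_, one_le_exp (by linarith), rfl⟩
  obtain ⟨u, hu, hu'⟩ : ∃ u, 0 < u ∧ exp (-z) = u := ⟨_, exp_pos _, rfl⟩
  have hshift : exp (-(z + 4 * a)) = u / E ^ 2 := by
    rw [← hu', ← hE, ← exp_nat_mul, ← exp_sub]; ring_nf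
  have htanh : tanh a = (E - 1) / (E + 1) := by
    rw [tanh_eq, ← hE, div_eq_div_iff (by positivity) (by positivity)]
    have : exp (2 * a) = exp a * exp a := by rw [← exp_add]; ring_nf
    rw [this, exp_neg]
    field_simp
  rw [sigmoid_def, sigmoid_def, hshift, hu', htanh]
  -- the increment over `[z, z + 4a]` is largest for the window centred at `0`, i.e. `u = E`
  have key : 0 ≤ (E - 1) * (u - E) ^ 2 := mul_nonneg (by linarith) (sq_nonneg _)
  field_simp
  nlinarith [key]

end Real

theorem abs_apply_add_int_mul_sub_le {f : ℝ → ℝ} {a L : ℝ} (hf : ∀ z, |f (z + a) - f z| ≤ L)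
    (m : ℤ) (z : ℝ) : |f (z + m * a) - f z| ≤ |m| * L := by
  have hnat : ∀ (n : ℕ) z, |f (z + n * a) - f z| ≤ n * L := by
    intro n
    induction n with
    | zero => simp
    | succ n ih =>
      intro z
      calc |f (z + ↑(n + 1) * a) - f z|
          ≤ |f (z + n * a + a) - f (z + n * a)| + |f (z + n * a) - f z| := by
            rw [Nat.cast_succ, add_one_mul, ← add_assoc]; exact abs_sub_le _ _ _
        _ ≤ ↑(n + 1) * L := by rw [Nat.cast_succ, add_one_mul]; linarith [hf (z + n * a), ih z]
  obtain ⟨n, rfl | rfl⟩ := m.eq_nat_or_neg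
  · simpa using hnat n z
  · simpa [abs_sub_comm, ← sub_eq_add_neg] using hnat n (z - n * a)

theorem Real.abs_sigmoid_add_int_mul_sub_le {a : ℝ} (ha : 0 ≤ a) (m : ℤ) (z : ℝ) :
    |sigmoid (z + m * (4 * a)) - sigmoid z| ≤ |m| * tanh a := by
  refine abs_apply_add_int_mul_sub_le (fun z => ?_) m z
  rw [abs_of_nonneg (sub_nonneg.2 (sigmoid_monotone (by linarith)))]
  exact sigmoid_add_four_mul_sub_le_tanh ha z

section Coupling

variable {α : Type*} [MeasurableSpace α]

def twoPoint (p : ℝ) (a b : α) : Measure α :=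
  ENNReal.ofReal p • Measure.dirac a + ENNReal.ofReal (1 - p) • Measure.dirac b

/-- The maximal coupling of `twoPoint p a b` and `twoPoint q a' b'`. -/
def twoPointCoupling (p q : ℝ) (a b a' b' : α) : Measure (α × α) :=
  ENNReal.ofReal (min p q) • Measure.dirac (a, a')
    + ENNReal.ofReal (min (1 - p) (1 - q)) • Measure.dirac (b, b')
    + ENNReal.ofReal (p - min p q) • Measure.dirac (a, b')
    + ENNReal.ofReal (q - min p q) • Measure.dirac (b, a')

variable {p q : ℝ}

theorem map_fst_twoPointCoupling (hp₀ : 0 ≤ p) (hp₁ : p ≤ 1) (hq₀ : 0 ≤ q) (hq₁ : q ≤ 1)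
    (a b a' b' : α) :
    (twoPointCoupling p q a b a' b').map Prod.fst = twoPoint p a b := by
  have hp : ENNReal.ofReal p = ENNReal.ofReal (min p q) + ENNReal.ofReal (p - min p q) := by
    rw [← ENNReal.ofReal_add (le_min hp₀ hq₀) (sub_nonneg.2 (min_le_left p q))]; ring_nf
  have hp' : ENNReal.ofReal (1 - p)
      = ENNReal.ofReal (min (1 - p) (1 - q)) + ENNReal.ofReal (q - min p q) := by
    rw [← ENNReal.ofReal_add (le_min (by linarith) (by linarith))
      (sub_nonneg.2 (min_le_right p q)), min_sub_sub_left]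
    congr 1; linarith [min_add_max p q]
  simp only [twoPointCoupling, twoPoint, Measure.map_add _ _ measurable_fst, Measure.map_smul,
    Measure.map_dirac' measurable_fst, hp, hp', add_smul]
  abel

theorem map_snd_twoPointCoupling (hp₀ : 0 ≤ p) (hp₁ : p ≤ 1) (hq₀ : 0 ≤ q) (hq₁ : q ≤ 1)
    (a b a' b' : α) :
    (twoPointCoupling p q a b a' b').map Prod.snd = twoPoint q a' b' := by
  have hq : ENNReal.ofReal q = ENNReal.ofReal (min p q) + ENNReal.ofReal (q - min p q) := by
    rw [← ENNReal.ofReal_add (le_min hp₀ hq₀) (sub_nonneg.2 (min_le_right p q))]; ring_nf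
  have hq' : ENNReal.ofReal (1 - q)
      = ENNReal.ofReal (min (1 - p) (1 - q)) + ENNReal.ofReal (p - min p q) := by
    rw [← ENNReal.ofReal_add (le_min (by linarith) (by linarith))
      (sub_nonneg.2 (min_le_left p q)), min_sub_sub_left]
    congr 1; linarith [min_add_max p q]
  simp only [twoPointCoupling, twoPoint, Measure.map_add _ _ measurable_snd, Measure.map_smul,
    Measure.map_dirac' measurable_snd, hq, hq', add_smul]
  abel

theorem lintegral_edist_twoPointCoupling [MeasurableSingletonClass X] (hp₀ : 0 ≤ p) (hp₁ : p ≤ 1)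
    (hq₀ : 0 ≤ q) (hq₁ : q ≤ 1) {a b a' b' : X} {E : ℝ}
    (haa' : dist a a' = E) (hbb' : dist b b' = E) (hab' : dist a b' = E + 1)
    (hba' : dist b a' = E + 1) :
    ∫⁻ z, edist z.1 z.2 ∂twoPointCoupling p q a b a' b' = ENNReal.ofReal (E + |p - q|) := by
  have hE : 0 ≤ E := haa' ▸ dist_nonneg
  have h₁ : 0 ≤ min p q := le_min hp₀ hq₀
  have h₂ : 0 ≤ min (1 - p) (1 - q) := le_min (by linarith) (by linarith)
  have h₃ : 0 ≤ p - min p q := sub_nonneg.2 (min_le_left p q)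
  have h₄ : 0 ≤ q - min p q := sub_nonneg.2 (min_le_right p q)
  have hmass : min p q + min (1 - p) (1 - q) + (p - min p q) + (q - min p q) = 1 := by
    rw [min_sub_sub_left]; linarith [min_add_max p q]
  have hmove : (p - min p q) + (q - min p q) = |p - q| := by
    rw [abs_sub_comm, ← max_sub_min_eq_abs]; linarith [min_add_max p q]
  simp only [twoPointCoupling, lintegral_add_measure, lintegral_smul_measure, lintegral_dirac,
    edist_dist, haa', hbb', hab', hba', smul_eq_mul]
  rw [← ENNReal.ofReal_mul h₁, ← ENNReal.ofReal_mul h₂, ← ENNReal.ofReal_mul h₃,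
    ← ENNReal.ofReal_mul h₄, ← ENNReal.ofReal_add (by positivity) (by positivity),
    ← ENNReal.ofReal_add (by positivity) (by positivity),
    ← ENNReal.ofReal_add (by positivity) (by positivity)]
  congr 1
  linear_combination E * hmass + hmove

end Coupling

theorem W1_uniform_mixture_le {ι : Type*} [Fintype ι] [Nonempty ι] (μ ν : ι → Measure X)
    (ξ : ι → Measure (X × X)) (hμ : ∀ i, (ξ i).map Prod.fst = μ i)
    (hν : ∀ i, (ξ i).map Prod.snd = ν i) {C : ι → ℝ} (hC₀ : ∀ i, 0 ≤ C i)
    (hC : ∀ i, ∫⁻ z, edist z.1 z.2 ∂ξ i = ENNReal.ofReal (C i)) :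
    W1 ((Fintype.card ι : ℝ≥0∞)⁻¹ • ∑ i, μ i) ((Fintype.card ι : ℝ≥0∞)⁻¹ • ∑ i, ν i)
      ≤ ENNReal.ofReal ((Fintype.card ι : ℝ)⁻¹ * ∑ i, C i) := by
  have hmarg {proj : X × X → X} (hproj : Measurable proj) :
      ((Fintype.card ι : ℝ≥0∞)⁻¹ • ∑ i, ξ i).map proj
        = (Fintype.card ι : ℝ≥0∞)⁻¹ • ∑ i, (ξ i).map proj := by
    rw [Measure.map_smul, Measure.map_finset_sum hproj.aemeasurable]
  refine iInf₂_le_of_le ((Fintype.card ι : ℝ≥0∞)⁻¹ • ∑ i, ξ i)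
    (by rw [hmarg measurable_fst]; simp_rw [hμ]) <|
    iInf_le_of_le (by rw [hmarg measurable_snd]; simp_rw [hν]) (le_of_eq ?_)
  rw [lintegral_smul_measure, lintegral_finsetSum_measure, ENNReal.ofReal_mul (by positivity),
    ENNReal.ofReal_inv_of_pos (by positivity), ENNReal.ofReal_natCast, ENNReal.ofReal_sum_of_nonneg
    fun i _ => hC₀ i, smul_eq_mul]
  simp_rw [hC]

theorem hammingDist_update_update {ι : Type*} [Fintype ι] [DecidableEq ι] {β : ι → Type*}
    [∀ i, DecidableEq (β i)] (f g : ∀ i, β i) (i : ι) (a b : β i) :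
    hammingDist (Function.update f i a) (Function.update g i b) + (if f i = g i then 0 else 1)
      = hammingDist f g + (if a = b then 0 else 1) := by
  simp only [hammingDist, Finset.card_filter, Fintype.sum_eq_add_sum_compl i,
    Function.update_self]
  have hrest : ∑ j ∈ {i}ᶜ, (if Function.update f i a j ≠ Function.update g i b j then 1 else 0)
      = ∑ j ∈ {i}ᶜ, if f j ≠ g j then 1 else 0 :=
    Finset.sum_congr rfl fun j hj => by
      rw [Function.update_of_ne (by simpa using hj), Function.update_of_ne (by simpa using hj)]
  rw [hrest]
  split_ifs <;> simp_all <;> omega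

theorem SimpleGraph.sum_card_neighborFinset_inter_le {V : Type*} [Fintype V] [DecidableEq V]
    (G : SimpleGraph V) [DecidableRel G.Adj] (D : Finset V) :
    ∑ x, #(G.neighborFinset x ∩ D) ≤ #D * G.maxDegree := by
  have habove : ∀ x, G.neighborFinset x ∩ D = D.bipartiteAbove G.Adj x := fun x => by
    ext y; simp [Finset.bipartiteAbove, and_comm]
  have hbelow : ∀ y, (Finset.univ.bipartiteBelow G.Adj y) = G.neighborFinset y := fun y => by
    ext x; simp [Finset.bipartiteBelow, G.adj_comm]
  simp_rw [habove]
  rw [Finset.sum_card_bipartiteAbove_eq_sum_card_bipartiteBelow, ← smul_eq_mul]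
  refine Finset.sum_le_card_nsmul _ _ _ fun y _ => ?_
  rw [hbelow, G.card_neighborFinset_eq_degree]
  exact G.degree_le_maxDegree y

theorem SimpleGraph.sum_adj_mul_sub_sum_adj_mul {V : Type*} [Fintype V] [DecidableEq V]
    (G : SimpleGraph V) [DecidableRel G.Adj] {f g : V → ℝ} {x : V}
    (hfg : ∀ y, y ≠ x → f y = g y) :
    (∑ a, ∑ b, if G.Adj a b then f a * f b else 0) - (∑ a, ∑ b, if G.Adj a b then g a * g b else 0)
      = 2 * (f x - g x) * ∑ y ∈ G.neighborFinset x, f y := by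
  obtain ⟨c, hc⟩ : ∃ c, f x - g x = c := ⟨_, rfl⟩
  have hdiff : ∀ a, f a - g a = if a = x then c else 0 := fun a => by
    split_ifs with ha
    · rw [ha, hc]
    · rw [hfg a ha, sub_self]
  -- the antisymmetric part `f a g b - g a f b` sums to zero over the symmetric relation `G.Adj`
  have hswap : (∑ a, ∑ b, if G.Adj a b then g a * f b else 0)
      = ∑ a, ∑ b, if G.Adj a b then f a * g b else 0 := by
    rw [Finset.sum_comm]
    refine Finset.sum_congr rfl fun a _ => Finset.sum_congr rfl fun b _ => ?_
    simp only [G.adj_comm b a, mul_comm (g b)]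
  calc (∑ a, ∑ b, if G.Adj a b then f a * f b else 0)
        - (∑ a, ∑ b, if G.Adj a b then g a * g b else 0)
      = (∑ a, ∑ b, if G.Adj a b then (f a - g a) * (f b + g b) else 0)
        + ((∑ a, ∑ b, if G.Adj a b then g a * f b else 0)
          - ∑ a, ∑ b, if G.Adj a b then f a * g b else 0) := by
        simp only [← Finset.sum_sub_distrib, ← Finset.sum_add_distrib]
        refine Finset.sum_congr rfl fun a _ => Finset.sum_congr rfl fun b _ => ?_
        split_ifs <;> ring
    _ = c * ∑ b, if G.Adj x b then f b + g b else 0 := by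
        rw [hswap, sub_self, add_zero]
        simp only [hdiff, ite_mul, zero_mul]
        rw [Finset.sum_eq_single x (fun a _ ha => by simp [ha]) (by simp), Finset.mul_sum]
        simp only [if_true, mul_ite, mul_zero]
    _ = 2 * (f x - g x) * ∑ y ∈ G.neighborFinset x, f y := by
        rw [hc, SimpleGraph.neighborFinset_eq_filter, Finset.sum_filter, Finset.mul_sum,
          Finset.mul_sum]
        refine Finset.sum_congr rfl fun b _ => ?_
        split_ifs with hb
        · rw [hfg b (G.ne_of_adj hb).symm]; ring
        · ring

section Ising

variable {V : Type*} [Fintype V]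

def disagreementSet (s s' : SpinConf V) : Finset V := {y | ofHamming s y ≠ ofHamming s' y}

theorem dist_eq_card_disagreementSet (s s' : SpinConf V) : dist s s' = #(disagreementSet s s') := by
  rw [dist_eq_hammingDist]
  rfl

theorem spin_eq_two_mul_toNat_sub_one (s : SpinConf V) (y : V) :
    spin s y = 2 * ((ofHamming s y).toNat : ℝ) - 1 := by
  unfold spin
  cases ofHamming s y <;> norm_num

variable [DecidableEq V]

theorem spin_setSpin (s : SpinConf V) (x : V) (b : Bool) (y : V) :
    spin (setSpin s x b) y = if y = x then (if b then 1 else -1) else spin s y := by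
  rcases eq_or_ne y x with rfl | hy
  · cases b <;> simp [spin, setSpin]
  · simp [spin, setSpin, hy]

theorem dist_setSpin_setSpin (s s' : SpinConf V) (x : V) (b b' : Bool) :
    dist (setSpin s x b) (setSpin s' x b')
      = dist s s' - (if ofHamming s x = ofHamming s' x then 0 else 1)
        + (if b = b' then 0 else 1) := by
  have h := congrArg (Nat.cast (R := ℝ))
    (hammingDist_update_update (ofHamming s) (ofHamming s') x b b')
  push_cast at h
  rw [dist_eq_hammingDist, dist_eq_hammingDist]
  simp only [setSpin, ofHamming_toHamming]
  linarith

theorem sum_dist_setSpin_setSpin (s s' : SpinConf V) (b : Bool) :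
    ∑ x, dist (setSpin s x b) (setSpin s' x b) = (Fintype.card V - 1) * dist s s' := by
  simp only [dist_setSpin_setSpin, if_true, add_zero, Finset.sum_sub_distrib, Finset.sum_const,
    Finset.card_univ, nsmul_eq_mul, Finset.sum_ite, mul_one]
  rw [dist_eq_card_disagreementSet, disagreementSet]
  ring

variable (G : SimpleGraph V) [DecidableRel G.Adj]

def localField (s : SpinConf V) (x : V) : ℝ := ∑ y ∈ G.neighborFinset x, spin s y

theorem isingEnergy_setSpin_false_sub_true (h : ℝ) (s : SpinConf V) (x : V) :
    isingEnergy G h (setSpin s x false) - isingEnergy G h (setSpin s x true)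
      = 2 * (localField G s x + h) := by
  have hquad := G.sum_adj_mul_sub_sum_adj_mul (x := x) (f := spin (setSpin s x true))
    (g := spin (setSpin s x false)) fun y hy => by simp [spin_setSpin, hy]
  have hfield : ∑ y ∈ G.neighborFinset x, spin (setSpin s x true) y = localField G s x :=
    Finset.sum_congr rfl fun y hy => by
      rw [spin_setSpin, if_neg (G.ne_of_adj ((G.mem_neighborFinset x y).1 hy)).symm]
  have hlin : ∑ y, spin (setSpin s x true) y - ∑ y, spin (setSpin s x false) y = 2 := by
    rw [← Finset.sum_sub_distrib, Finset.sum_eq_single x (fun y _ hy => by simp [spin_setSpin, hy])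
      (by simp)]
    norm_num [spin_setSpin]
  have hjump : spin (setSpin s x true) x - spin (setSpin s x false) x = 2 := by
    norm_num [spin_setSpin]
  rw [hfield, hjump] at hquad
  unfold isingEnergy
  linear_combination (1 / 2) * hquad + h * hlin

end Ising

section HeatBath

variable {V : Type*} [Fintype V] [DecidableEq V] (G : SimpleGraph V) [DecidableRel G.Adj]

def heatBathProb (β h : ℝ) (s : SpinConf V) (x : V) : ℝ :=
  sigmoid (2 * β * (localField G s x + h))

theorem glauberKernel_eq_smul_sum_twoPoint (β h : ℝ) (s : SpinConf V) :
    glauberKernel G β h s = (Fintype.card V : ℝ≥0∞)⁻¹ •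
      ∑ x, twoPoint (heatBathProb G β h s x) (setSpin s x true) (setSpin s x false) := by
  unfold glauberKernel
  congr 1
  refine Finset.sum_congr rfl fun x _ => ?_
  have hargs : -β * isingEnergy G h (setSpin s x true) - -β * isingEnergy G h (setSpin s x false)
      = 2 * β * (localField G s x + h) := by
    linear_combination β * isingEnergy_setSpin_false_sub_true G h s x
  have hplus : exp (-β * isingEnergy G h (setSpin s x true)) / (exp (-β * isingEnergy G h
      (setSpin s x true)) + exp (-β * isingEnergy G h (setSpin s x false)))
      = heatBathProb G β h s x := by
    rw [exp_div_exp_add_exp, hargs, heatBathProb]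
  rw [← hplus, twoPoint, one_sub_div (by positivity), add_sub_cancel_left]

theorem exists_localField_sub_eq (s s' : SpinConf V) (x : V) :
    ∃ c : ℤ, |c| ≤ #(G.neighborFinset x ∩ disagreementSet s s')
      ∧ localField G s x - localField G s' x = 2 * c := by
  refine ⟨∑ y ∈ G.neighborFinset x,
    (((ofHamming s y).toNat : ℤ) - (ofHamming s' y).toNat), ?_, ?_⟩
  · calc _ ≤ ∑ y ∈ G.neighborFinset x, |((ofHamming s y).toNat : ℤ) - (ofHamming s' y).toNat| :=
          Finset.abs_sum_le_sum_abs _ _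
      _ = ∑ y ∈ G.neighborFinset x, if ofHamming s y ≠ ofHamming s' y then 1 else 0 :=
          Finset.sum_congr rfl fun y _ => by
            cases ofHamming s y <;> cases ofHamming s' y <;> rfl
      _ = _ := by
          rw [Finset.sum_boole, Nat.cast_inj]
          congr 1
          ext y
          simp [disagreementSet]
  · simp only [localField, spin_eq_two_mul_toNat_sub_one, ← Finset.sum_sub_distrib]
    push_cast
    rw [Finset.mul_sum]
    exact Finset.sum_congr rfl fun y _ => by ring

theorem abs_heatBathProb_sub_le {β : ℝ} (hβ : 0 ≤ β) (h : ℝ) (s s' : SpinConf V) (x : V) :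
    |heatBathProb G β h s x - heatBathProb G β h s' x|
      ≤ #(G.neighborFinset x ∩ disagreementSet s s') * tanh β := by
  obtain ⟨c, hc, hfield⟩ := exists_localField_sub_eq G s s' x
  have harg : 2 * β * (localField G s x + h) = 2 * β * (localField G s' x + h) + c * (4 * β) := by
    linear_combination 2 * β * hfield
  rw [heatBathProb, heatBathProb, harg]
  exact (abs_sigmoid_add_int_mul_sub_le hβ c _).trans
    (mul_le_mul_of_nonneg_right (by exact_mod_cast hc) (tanh_nonneg hβ))

theorem sum_abs_heatBathProb_sub_le {β : ℝ} (hβ : 0 ≤ β) (h : ℝ) (s s' : SpinConf V) :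
    ∑ x, |heatBathProb G β h s x - heatBathProb G β h s' x|
      ≤ G.maxDegree * tanh β * dist s s' := by
  calc _ ≤ ∑ x, (#(G.neighborFinset x ∩ disagreementSet s s') : ℝ) * tanh β :=
        Finset.sum_le_sum fun x _ => abs_heatBathProb_sub_le G hβ h s s' x
    _ ≤ (#(disagreementSet s s') * G.maxDegree : ℕ) * tanh β := by
        rw [← Finset.sum_mul]
        exact mul_le_mul_of_nonneg_right (by exact_mod_cast G.sum_card_neighborFinset_inter_le _)
          (tanh_nonneg hβ)
    _ = _ := by rw [dist_eq_card_disagreementSet]; push_cast; ring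

end HeatBath

/-- **Curvature of the Glauber dynamics for the Ising model** (Section 2.2 of
Joulin–Ollivier): the heat bath chain has Ricci curvature at least
`(1/|G|)(1 − v_max (e^β − e^{−β})/(e^β + e^{−β}))`; in particular
`W₁(P_s, P_{s'}) ≤ (1 − κ) d(s,s')` with this value of `κ`. -/
theorem glauber_ising_curvature
    {V : Type*} [Fintype V] [DecidableEq V] [Nonempty V]
    (G : SimpleGraph V) [DecidableRel G.Adj] (β h : ℝ) (hβ : 0 ≤ β) :
    ∀ s s' : SpinConf V,
      W1 (glauberKernel G β h s) (glauberKernel G β h s')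
        ≤ ENNReal.ofReal
            ((1 - (1 / (Fintype.card V : ℝ)) *
                (1 - (G.maxDegree : ℝ) *
                  ((Real.exp β - Real.exp (-β)) / (Real.exp β + Real.exp (-β))))) *
              dist s s') := by
  intro s s'
  set p := heatBathProb G β h s
  set q := heatBathProb G β h s'
  have hp₀ x : 0 ≤ p x := sigmoid_nonneg _
  have hp₁ x : p x ≤ 1 := sigmoid_le_one _
  have hq₀ x : 0 ≤ q x := sigmoid_nonneg _
  have hq₁ x : q x ≤ 1 := sigmoid_le_one _
  rw [← tanh_eq, glauberKernel_eq_smul_sum_twoPoint, glauberKernel_eq_smul_sum_twoPoint]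
  refine (W1_uniform_mixture_le _ _ (fun x => twoPointCoupling (p x) (q x) (setSpin s x true)
    (setSpin s x false) (setSpin s' x true) (setSpin s' x false))
    (fun x => map_fst_twoPointCoupling (hp₀ x) (hp₁ x) (hq₀ x) (hq₁ x) ..)
    (fun x => map_snd_twoPointCoupling (hp₀ x) (hp₁ x) (hq₀ x) (hq₁ x) ..)
    (C := fun x => dist (setSpin s x true) (setSpin s' x true) + |p x - q x|)
    (fun x => by positivity)
    (fun x => lintegral_edist_twoPointCoupling (hp₀ x) (hp₁ x) (hq₀ x) (hq₁ x) rfl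
      (by rw [dist_setSpin_setSpin, dist_setSpin_setSpin]; norm_num)
      (by rw [dist_setSpin_setSpin, dist_setSpin_setSpin]; norm_num)
      (by rw [dist_setSpin_setSpin, dist_setSpin_setSpin]; norm_num))).trans
    (ENNReal.ofReal_le_ofReal ?_)
  have hcard : (0 : ℝ) < Fintype.card V := by exact_mod_cast Fintype.card_pos
  rw [Finset.sum_add_distrib, sum_dist_setSpin_setSpin]
  calc _ ≤ (Fintype.card V : ℝ)⁻¹ * ((Fintype.card V - 1) * dist s s'
          + G.maxDegree * tanh β * dist s s') := by
        gcongr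
        exact sum_abs_heatBathProb_sub_le G hβ h s s'
    _ = _ := by field_simp; ring
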